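/- arXiv:1401.7413 — 2 statements merged into one kernel-verified Lean document; each statement's English description precedes it below -/
import Mathlib

section
/- Let 0 < p < 2, μ > 0, and let X, Y ∈ ℝ^{m×n} be arbitrary real matrices. Then Tr((YᵀY + μ²I)^{p/2}) − Tr((XᵀX + μ²I)^{p/2}) ≥ (p/2) · Tr((YᵀY − XᵀX)(YᵀY + μ²I)^{p/2 − 1}), where I is the n×n identity matrix. -/
/-!
With `A = XᵀX + μ²I` and `B = YᵀY + μ²I`, this is Klein's inequality for the concave function
`x ↦ x ^ q`, `q = p/2 ∈ (0, 1)`. Writing `A = U diag(λ) Uᵀ`, `B = V diag(ν) Vᵀ` and `W = UᵀV`,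
every trace `Tr(φ(A) ψ(B))` equals `∑ᵢⱼ φ(λᵢ) ψ(νⱼ) Wᵢⱼ²`, and `Tr φ(A)`, `Tr φ(B)`, `Tr(A ψ(B))`,
`Tr(B ψ(B))` are all of this form. The matrix inequality is therefore a combination, with the
nonnegative weights `Wᵢⱼ²`, of the tangent-line inequalities `λᵢ^q ≤ νⱼ^q + q νⱼ^(q-1) (λᵢ - νⱼ)`.
-/

open Matrix

/-- Real power of a real symmetric matrix, defined through the spectral decomposition
`A = U · diag(λ₁,…,λₙ) · Uᵀ` as `A^r = U · diag(λ₁^r,…,λₙ^r) · Uᵀ`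
(junk value `0` if `A` is not symmetric). -/
noncomputable def mpow {n : ℕ} (A : Matrix (Fin n) (Fin n) ℝ) (r : ℝ) :
    Matrix (Fin n) (Fin n) ℝ :=
  if hA : A.IsHermitian then hA.cfc (fun x : ℝ => x ^ r) else 0

theorem Real.rpow_le_rpow_add_mul_rpow_sub_one_mul_sub {q a b : ℝ} (hq0 : 0 ≤ q) (hq1 : q ≤ 1)
    (ha : 0 ≤ a) (hb : 0 < b) : a ^ q ≤ b ^ q + q * b ^ (q - 1) * (a - b) := by
  have hbernoulli : (a / b) ^ q ≤ 1 + q * (a / b - 1) := by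
    simpa using rpow_one_add_le_one_add_mul_self (s := a / b - 1)
      (by linarith [div_nonneg ha hb.le]) hq0 hq1
  rw [div_rpow ha hb.le, div_le_iff₀ (rpow_pos_of_pos hb q)] at hbernoulli
  calc a ^ q ≤ (1 + q * (a / b - 1)) * b ^ q := hbernoulli
    _ = b ^ q + q * (b ^ q / b) * (a - b) := by field_simp
    _ = b ^ q + q * b ^ (q - 1) * (a - b) := by rw [rpow_sub_one hb.ne']

namespace Matrix

variable {n : Type*} [Fintype n] [DecidableEq n] {A B : Matrix n n ℝ}

lemma trace_diagonal_mul_mul_diagonal_mul_transpose (d e : n → ℝ) (W : Matrix n n ℝ) :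
    (diagonal d * W * diagonal e * Wᵀ).trace = ∑ i, ∑ j, d i * e j * W i j ^ 2 := by
  rw [trace]
  refine Finset.sum_congr rfl fun i _ => ?_
  rw [diag_apply, mul_apply]
  refine Finset.sum_congr rfl fun j _ => ?_
  rw [mul_diagonal, diagonal_mul, transpose_apply]
  ring

namespace IsHermitian

lemma trace_cfc_mul_cfc (hA : A.IsHermitian) (hB : B.IsHermitian) (f g : ℝ → ℝ) :
    (hA.cfc f * hB.cfc g).trace = ∑ i, ∑ j, f (hA.eigenvalues i) * g (hB.eigenvalues j) *
      (star (hA.eigenvectorUnitary : Matrix n n ℝ) * hB.eigenvectorUnitary) i j ^ 2 := by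
  set U : Matrix n n ℝ := ↑hA.eigenvectorUnitary
  set V : Matrix n n ℝ := ↑hB.eigenvectorUnitary
  rw [← trace_diagonal_mul_mul_diagonal_mul_transpose, IsHermitian.cfc, IsHermitian.cfc,
    Unitary.conjStarAlgAut_apply, Unitary.conjStarAlgAut_apply]
  have hWt : (star U * V)ᵀ = star V * U := by
    simp [star_eq_conjTranspose, conjTranspose_eq_transpose_of_trivial]
  simp only [RCLike.ofReal_real_eq_id, Function.comp_def, id, hWt, Matrix.mul_assoc]
  rw [trace_mul_comm U]
  simp only [Matrix.mul_assoc]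
  rfl

lemma cfc_const_one (hA : A.IsHermitian) : hA.cfc (fun _ => 1) = 1 := by
  rw [← hA.cfc_eq]
  exact cfc_one ℝ A

lemma cfc_self (hA : A.IsHermitian) : hA.cfc (fun x => x) = A := by
  rw [← hA.cfc_eq]
  exact cfc_id' ℝ A

lemma cfc_mul (hA : A.IsHermitian) (f g : ℝ → ℝ) :
    hA.cfc (fun x => f x * g x) = hA.cfc f * hA.cfc g := by
  simp only [← hA.cfc_eq]
  exact _root_.cfc_mul f g A (A.finite_real_spectrum.continuousOn f)
    (A.finite_real_spectrum.continuousOn g)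

lemma cfc_const_mul (hA : A.IsHermitian) (c : ℝ) (f : ℝ → ℝ) :
    hA.cfc (fun x => c * f x) = c • hA.cfc f := by
  simp only [← hA.cfc_eq]
  exact _root_.cfc_const_mul c f A (A.finite_real_spectrum.continuousOn f)

theorem trace_sub_mul_cfc_le_of_tangent (hA : A.IsHermitian) (hB : B.IsHermitian)
    {f g : ℝ → ℝ} (hfg : ∀ i j, f (hA.eigenvalues i) ≤
      f (hB.eigenvalues j) + g (hB.eigenvalues j) * (hA.eigenvalues i - hB.eigenvalues j)) :
    ((B - A) * hB.cfc g).trace ≤ (hB.cfc f).trace - (hA.cfc f).trace := by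
  have hAf : (hA.cfc f).trace = (hA.cfc f * hB.cfc (fun _ => 1)).trace := by
    rw [hB.cfc_const_one, Matrix.mul_one]
  have hBf : (hB.cfc f).trace = (hA.cfc (fun _ => 1) * hB.cfc f).trace := by
    rw [hA.cfc_const_one, Matrix.one_mul]
  have hAg : (A * hB.cfc g).trace = (hA.cfc (fun x => x) * hB.cfc g).trace := by
    rw [hA.cfc_self]
  have hBg : (B * hB.cfc g).trace =
      (hA.cfc (fun _ => 1) * hB.cfc (fun x => x * g x)).trace := by
    rw [hA.cfc_const_one, Matrix.one_mul, hB.cfc_mul, hB.cfc_self]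
  rw [sub_mul, trace_sub, hAf, hBf, hAg, hBg]
  simp only [trace_cfc_mul_cfc, ← Finset.sum_sub_distrib]
  refine Finset.sum_le_sum fun i _ => Finset.sum_le_sum fun j _ => ?_
  have hweighted := mul_le_mul_of_nonneg_right (hfg i j)
    (sq_nonneg ((star (hA.eigenvectorUnitary : Matrix n n ℝ) * hB.eigenvectorUnitary) i j))
  linarith

end IsHermitian

lemma posDef_transpose_mul_self_add_smul_one {m : Type*} [Fintype m] (X : Matrix m n ℝ)
    {μ : ℝ} (hμ : 0 < μ) : (Xᵀ * X + μ ^ 2 • (1 : Matrix n n ℝ)).PosDef := by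
  have hX : (Xᵀ * X).PosSemidef := by
    simpa [conjTranspose_eq_transpose_of_trivial] using posSemidef_conjTranspose_mul_self X
  exact PosDef.posSemidef_add hX (PosDef.one.smul (by positivity))

end Matrix

/-- Inequality (19): for `0 < p < 2`, `μ > 0` and arbitrary real matrices `X, Y ∈ ℝ^{m×n}`,
`Tr((YᵀY + μ²I)^{p/2}) − Tr((XᵀX + μ²I)^{p/2}) ≥ (p/2)·Tr((YᵀY − XᵀX)(YᵀY + μ²I)^{p/2−1})`. -/
theorem stmt_6 {m n : ℕ} (p μ : ℝ) (hp0 : 0 < p) (hp2 : p < 2) (hμ : 0 < μ)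
    (X Y : Matrix (Fin m) (Fin n) ℝ) :
    p / 2 * ((Yᵀ * Y - Xᵀ * X) *
        mpow (Yᵀ * Y + μ ^ 2 • (1 : Matrix (Fin n) (Fin n) ℝ)) (p / 2 - 1)).trace ≤
      (mpow (Yᵀ * Y + μ ^ 2 • (1 : Matrix (Fin n) (Fin n) ℝ)) (p / 2)).trace -
        (mpow (Xᵀ * X + μ ^ 2 • (1 : Matrix (Fin n) (Fin n) ℝ)) (p / 2)).trace := by
  have hA := posDef_transpose_mul_self_add_smul_one X hμ
  have hB := posDef_transpose_mul_self_add_smul_one Y hμ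
  have klein := hA.1.trace_sub_mul_cfc_le_of_tangent hB.1
    (f := fun x => x ^ (p / 2)) (g := fun x => p / 2 * x ^ (p / 2 - 1))
    fun i j => Real.rpow_le_rpow_add_mul_rpow_sub_one_mul_sub (by linarith) (by linarith)
      (hA.eigenvalues_pos i).le (hB.eigenvalues_pos j)
  rw [hB.1.cfc_const_mul, Matrix.mul_smul, trace_smul, smul_eq_mul,
    add_sub_add_right_eq_sub] at klein
  simpa only [mpow, dif_pos hA.1, dif_pos hB.1] using klein
end

section
/- Let X ∈ ℝ^{d×n}, λ > 0, 1 ≤ p, q ≤ 2, and fix μ ∈ ℝ. The function Z ↦ Tr((ZᵀZ + μ²I)^{p/2}) + λ ∑_{i=1}^n (‖(XZ − X)_i‖_2² + μ²)^{q/2} is convex on ℝ^{n×n}. -/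
open Matrix

/-- The smoothed LRR objective
`J(Z, μ) = Tr((ZᵀZ + μ²I)^{p/2}) + λ·∑ᵢ (‖(XZ − X)ᵢ‖₂² + μ²)^{q/2}`,
where `(XZ − X)ᵢ` denotes the `i`-th column of `XZ − X`. -/
noncomputable def smoothJ {d n : ℕ} (X : Matrix (Fin d) (Fin n) ℝ) (lam p q : ℝ)
    (Z : Matrix (Fin n) (Fin n) ℝ) (μ : ℝ) : ℝ :=
  (mpow (Zᵀ * Z + μ ^ 2 • (1 : Matrix (Fin n) (Fin n) ℝ)) (p / 2)).trace +
    lam * ∑ i, (∑ j, ((X * Z - X) j i) ^ 2 + μ ^ 2) ^ (q / 2)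

/-!
The fidelity term is a sum of the functions `(‖v‖² + μ²)^{q/2} = ‖(v, μ)‖^q`, composed with
affine maps of `Z`; they are convex since `q ≥ 1`.

For the first term, embed `Z` into its symmetric dilation `D(Z) = [[0, Zᵀ], [Z, 0]]`, whose
square is `diag(ZᵀZ, ZZᵀ)`. As `ZᵀZ + μ²I` and `ZZᵀ + μ²I` have the same characteristic
polynomial, `Tr f(D(Z)) = 2 Tr((ZᵀZ + μ²I)^{p/2})` for the convex function
`f x = (x² + μ²)^{p/2}`. Finally `A ↦ Tr f(A)` is convex on symmetric matrices by Peierls'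
inequality `∑ᵢ f(⟨vᵢ, A vᵢ⟩) ≤ Tr f(A)` for orthonormal bases `(vᵢ)`, with equality for an
eigenbasis of `A`, and `D` is linear.
-/

open Finset

theorem ConvexOn.rpow {E : Type*} [AddCommGroup E] [Module ℝ E] {s : Set E} {f : E → ℝ}
    (hf : ConvexOn ℝ s f) (hf₀ : ∀ ⦃x⦄, x ∈ s → 0 ≤ f x) {p : ℝ} (hp : 1 ≤ p) :
    ConvexOn ℝ s (fun x => f x ^ p) := by
  refine ⟨hf.1, fun x hx y hy a b ha hb hab => ?_⟩
  calc f (a • x + b • y) ^ p ≤ (a • f x + b • f y) ^ p :=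
        Real.rpow_le_rpow (hf₀ (hf.1 hx hy ha hb hab)) (hf.2 hx hy ha hb hab) (by linarith)
    _ ≤ a • f x ^ p + b • f y ^ p := (convexOn_rpow hp).2 (hf₀ hx) (hf₀ hy) ha hb hab

theorem convexOn_finset_sum {ι E : Type*} [AddCommGroup E] [Module ℝ E] {s : Set E}
    (hs : Convex ℝ s) (t : Finset ι) {f : ι → E → ℝ} (hf : ∀ i ∈ t, ConvexOn ℝ s (f i)) :
    ConvexOn ℝ s (fun x => ∑ i ∈ t, f i x) := by
  classical
  induction t using Finset.induction_on with
  | empty => simpa using convexOn_const 0 hs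
  | insert i t hi ih =>
    simp only [Finset.sum_insert hi]
    exact (hf i (mem_insert_self i t)).add (ih fun j hj => hf j (mem_insert_of_mem hj))

theorem convexOn_rpow_norm_sq_add_sq {E : Type*} [NormedAddCommGroup E] [NormedSpace ℝ E]
    (c : ℝ) {r : ℝ} (hr : 1 ≤ r) :
    ConvexOn ℝ Set.univ (fun x : E => (‖x‖ ^ 2 + c ^ 2) ^ (r / 2)) := by
  have hnorm : ∀ x : E, (‖x‖ ^ 2 + c ^ 2) ^ (r / 2) = ‖WithLp.toLp 2 (x, c)‖ ^ r := by
    intro x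
    rw [WithLp.prod_norm_eq_of_L2, Real.sqrt_eq_rpow, ← Real.rpow_mul (by positivity),
      one_div_mul_eq_div]
    simp [Real.norm_eq_abs, sq_abs]
  have hconv : ConvexOn ℝ Set.univ (fun x : E => ‖WithLp.toLp 2 (x, c)‖) := by
    refine ⟨convex_univ, fun x _ y _ a b ha hb hab => ?_⟩
    have hcomb : WithLp.toLp 2 (a • x + b • y, c)
        = a • WithLp.toLp 2 (x, c) + b • WithLp.toLp 2 (y, c) := by
      rw [← WithLp.toLp_smul, ← WithLp.toLp_smul, ← WithLp.toLp_add, Prod.smul_mk, Prod.smul_mk,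
        Prod.mk_add_mk, ← add_smul, hab, one_smul]
    simp only [hcomb]
    exact (convexOn_norm convex_univ).2 trivial trivial ha hb hab
  simp only [hnorm]
  exact hconv.rpow (fun _ _ => norm_nonneg _) hr

namespace Matrix

section Spectral

variable {m : Type*} [Fintype m] [DecidableEq m]

theorem IsHermitian.trace_cfc {A : Matrix m m ℝ} (hA : A.IsHermitian) (f : ℝ → ℝ) :
    (cfc f A).trace = ∑ i, f (hA.eigenvalues i) := by
  rw [hA.cfc_eq, IsHermitian.cfc, Unitary.conjStarAlgAut_apply, trace_mul_cycle,
    Unitary.coe_star_mul_self, one_mul, trace_diagonal]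
  rfl

theorem IsHermitian.roots_charpoly_cfc {A : Matrix m m ℝ} (hA : A.IsHermitian) (f : ℝ → ℝ) :
    (cfc f A).charpoly.roots = univ.val.map (f ∘ hA.eigenvalues) := by
  rw [hA.charpoly_cfc_eq,
    ← Polynomial.roots_multiset_prod_X_sub_C (univ.val.map (f ∘ hA.eigenvalues)),
    Multiset.map_map, prod_eq_multiset_prod]
  rfl

theorem IsHermitian.trace_cfc_comp {A : Matrix m m ℝ} (hA : A.IsHermitian) (g h : ℝ → ℝ) :
    (cfc (g ∘ h) A).trace = ((cfc h A).charpoly.roots.map g).sum := by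
  rw [hA.trace_cfc, hA.roots_charpoly_cfc, Multiset.map_map, sum_eq_multiset_sum]
  rfl

theorem IsHermitian.trace_cfc_eq_sum_roots {A : Matrix m m ℝ} (hA : A.IsHermitian)
    (f : ℝ → ℝ) : (cfc f A).trace = (A.charpoly.roots.map f).sum := by
  have h := hA.trace_cfc_comp f id
  rwa [cfc_id ℝ A] at h

theorem sum_sq_col_eq_one_of_mem_unitary {W : Matrix m m ℝ} (hW : W ∈ unitary (Matrix m m ℝ))
    (i : m) : ∑ j, W j i ^ 2 = 1 := by
  simpa [mul_apply, sq] using congrArg (· i i) (Unitary.star_mul_self_of_mem hW)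

theorem sum_sq_row_eq_one_of_mem_unitary {W : Matrix m m ℝ} (hW : W ∈ unitary (Matrix m m ℝ))
    (j : m) : ∑ i, W j i ^ 2 = 1 := by
  simpa [mul_apply, sq] using congrArg (· j j) (Unitary.mul_star_self_of_mem hW)

/-- Peierls' inequality. With `W = Uᵀ V` for an eigenbasis `U` of `A`, the diagonal entries of
`Vᵀ A V` are averages of the eigenvalues with the doubly stochastic weights `W j i ^ 2`, so
Jensen's inequality applies column by column. -/
theorem IsHermitian.sum_diag_conj_le_trace_cfc {A : Matrix m m ℝ} (hA : A.IsHermitian)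
    {f : ℝ → ℝ} (hf : ConvexOn ℝ Set.univ f) (V : unitary (Matrix m m ℝ)) :
    ∑ i, f ((star (V : Matrix m m ℝ) * A * V) i i) ≤ (cfc f A).trace := by
  set e := hA.eigenvalues
  set W : unitary (Matrix m m ℝ) := star hA.eigenvectorUnitary * V
  have hconj : star (V : Matrix m m ℝ) * A * V = star (W : Matrix m m ℝ) * diagonal e * W := by
    conv_lhs => rw [hA.spectral_theorem, Unitary.conjStarAlgAut_apply]
    simp only [W, Submonoid.coe_mul, Unitary.coe_star, star_mul, star_star, mul_assoc,
      RCLike.ofReal_real_eq_id, Function.id_comp, e]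
  have hdiag : ∀ i, (star (V : Matrix m m ℝ) * A * V) i i = ∑ j, W j i ^ 2 • e j := by
    intro i
    rw [hconj, mul_apply]
    simp only [mul_diagonal, star_apply, star_trivial, smul_eq_mul]
    exact sum_congr rfl fun j _ => by ring
  calc ∑ i, f ((star (V : Matrix m m ℝ) * A * V) i i)
      ≤ ∑ i, ∑ j, W j i ^ 2 • f (e j) := by
        refine sum_le_sum fun i _ => ?_
        rw [hdiag]
        exact hf.map_sum_le (fun j _ => sq_nonneg _)
          (sum_sq_col_eq_one_of_mem_unitary W.prop i) fun j _ => trivial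
    _ = ∑ j, f (e j) := by
        rw [sum_comm]
        simp only [← sum_smul, sum_sq_row_eq_one_of_mem_unitary W.prop, one_smul]
    _ = (cfc f A).trace := (hA.trace_cfc f).symm

/-- Computing the trace at `a • A + b • B` in an eigenbasis `V` of that matrix, Peierls'
inequality bounds the traces at `A` and `B` from below by the same diagonal sums in `V`. -/
theorem convexOn_trace_cfc {f : ℝ → ℝ} (hf : ConvexOn ℝ Set.univ f) :
    ConvexOn ℝ {A : Matrix m m ℝ | A.IsHermitian} (fun A => (cfc f A).trace) := by
  refine ⟨(selfAdjoint.submodule ℝ (Matrix m m ℝ)).convex, ?_⟩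
  intro A hA B hB a b ha hb hab
  have hC : (a • A + b • B).IsHermitian :=
    (selfAdjoint.submodule ℝ (Matrix m m ℝ)).convex hA hB ha hb hab
  set V := hC.eigenvectorUnitary
  have htrace : (cfc f (a • A + b • B)).trace
      = ∑ i, f ((star (V : Matrix m m ℝ) * (a • A + b • B) * V) i i) := by
    have hdiag : star (V : Matrix m m ℝ) * (a • A + b • B) * V = diagonal hC.eigenvalues := by
      simpa [RCLike.ofReal_real_eq_id] using hC.conjStarAlgAut_star_eigenvectorUnitary
    simp [hC.trace_cfc, hdiag]
  calc (cfc f (a • A + b • B)).trace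
      = ∑ i, f (a * (star (V : Matrix m m ℝ) * A * V) i i
          + b * (star (V : Matrix m m ℝ) * B * V) i i) := by
        simp only [htrace, Matrix.mul_add, Matrix.add_mul, Matrix.mul_smul, Matrix.smul_mul,
          add_apply, smul_apply, smul_eq_mul]
    _ ≤ ∑ i, (a * f ((star (V : Matrix m m ℝ) * A * V) i i)
          + b * f ((star (V : Matrix m m ℝ) * B * V) i i)) :=
        sum_le_sum fun i _ => hf.2 trivial trivial ha hb hab
    _ = a * ∑ i, f ((star (V : Matrix m m ℝ) * A * V) i i)
          + b * ∑ i, f ((star (V : Matrix m m ℝ) * B * V) i i) := by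
        rw [sum_add_distrib, mul_sum, mul_sum]
    _ ≤ a * (cfc f A).trace + b * (cfc f B).trace := by
        gcongr
        · exact hA.sum_diag_conj_le_trace_cfc hf V
        · exact hB.sum_diag_conj_le_trace_cfc hf V

theorem charpoly_mul_add_smul_one_comm {R : Type*} [CommRing R] (A B : Matrix m m R) (c : R) :
    (A * B + c • 1).charpoly = (B * A + c • 1).charpoly := by
  have h : ∀ M : Matrix m m R, M + c • 1 = M - scalar m (-c) := fun M => by
    simp [sub_eq_add_neg, smul_one_eq_diagonal]
  rw [h, h, charpoly_sub_scalar, charpoly_sub_scalar, charpoly_mul_comm]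

end Spectral

section Dilation

variable {m n : Type*}

def dilation : Matrix m n ℝ →ₗ[ℝ] Matrix (n ⊕ m) (n ⊕ m) ℝ where
  toFun Z := fromBlocks 0 Zᵀ Z 0
  map_add' Z W := by simp [fromBlocks_add]
  map_smul' c Z := by simp [fromBlocks_smul]

@[simp]
theorem dilation_apply (Z : Matrix m n ℝ) : dilation Z = fromBlocks 0 Zᵀ Z 0 := rfl

theorem isHermitian_dilation (Z : Matrix m n ℝ) : (dilation Z).IsHermitian := by
  rw [dilation_apply, isHermitian_fromBlocks_iff]
  simp [conjTranspose_eq_transpose_of_trivial]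

theorem dilation_sq [Fintype m] [Fintype n] [DecidableEq m] [DecidableEq n]
    (Z : Matrix m n ℝ) : dilation Z ^ 2 = fromBlocks (Zᵀ * Z) 0 0 (Z * Zᵀ) := by
  rw [dilation_apply, sq, fromBlocks_multiply]
  simp

theorem isHermitian_transpose_mul_self_add_smul_one [Fintype m] [DecidableEq n]
    (Z : Matrix m n ℝ) (c : ℝ) : (Zᵀ * Z + c • 1).IsHermitian := by
  simpa [conjTranspose_eq_transpose_of_trivial] using
    (isHermitian_conjTranspose_mul_self Z).add (isHermitian_one.smul (IsSelfAdjoint.all c))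

/-- The eigenvalues of `D(Z)² + c` are those of `ZᵀZ + c` together with those of `ZZᵀ + c`,
and these two matrices have the same characteristic polynomial. -/
theorem trace_cfc_sq_add_dilation [Fintype n] [DecidableEq n] (Z : Matrix n n ℝ) (c : ℝ)
    (g : ℝ → ℝ) :
    (cfc (fun x => g (x ^ 2 + c)) (dilation Z)).trace = 2 * (cfc g (Zᵀ * Z + c • 1)).trace := by
  have hD := isHermitian_dilation Z
  have hB := isHermitian_transpose_mul_self_add_smul_one Z c
  have hsq : cfc (fun x => x ^ 2 + c) (dilation Z)
      = fromBlocks (Zᵀ * Z + c • 1) 0 0 (Z * Zᵀ + c • 1) := by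
    rw [cfc_add_const c (· ^ 2) (dilation Z) (ha := hD.isSelfAdjoint),
      cfc_pow_id _ 2 hD.isSelfAdjoint, dilation_sq, Algebra.algebraMap_eq_smul_one,
      ← fromBlocks_one, fromBlocks_smul, fromBlocks_add]
    simp
  have hne : (Zᵀ * Z + c • 1).charpoly * (Zᵀ * Z + c • 1).charpoly ≠ 0 :=
    mul_ne_zero (charpoly_monic _).ne_zero (charpoly_monic _).ne_zero
  rw [show (fun x => g (x ^ 2 + c)) = g ∘ (fun x => x ^ 2 + c) from rfl, hD.trace_cfc_comp, hsq,
    charpoly_fromBlocks_zero₁₂, charpoly_mul_add_smul_one_comm Z Zᵀ c, Polynomial.roots_mul hne,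
    Multiset.map_add, Multiset.sum_add, hB.trace_cfc_eq_sum_roots, two_mul]

end Dilation

end Matrix

theorem mpow_eq_cfc {n : ℕ} {A : Matrix (Fin n) (Fin n) ℝ} (hA : A.IsHermitian) (r : ℝ) :
    mpow A r = cfc (fun x : ℝ => x ^ r) A := by
  rw [mpow, dif_pos hA, hA.cfc_eq]

theorem convexOn_trace_mpow_transpose_mul_self_add_sq {n : ℕ} (μ : ℝ) {p : ℝ} (hp : 1 ≤ p) :
    ConvexOn ℝ Set.univ (fun Z : Matrix (Fin n) (Fin n) ℝ =>
      (mpow (Zᵀ * Z + μ ^ 2 • (1 : Matrix (Fin n) (Fin n) ℝ)) (p / 2)).trace) := by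
  have hf : ConvexOn ℝ Set.univ (fun x : ℝ => (x ^ 2 + μ ^ 2) ^ (p / 2)) := by
    simpa [Real.norm_eq_abs, sq_abs] using convexOn_rpow_norm_sq_add_sq (E := ℝ) μ hp
  have hD : (dilation : Matrix (Fin n) (Fin n) ℝ →ₗ[ℝ] _) ⁻¹' {A | A.IsHermitian} = Set.univ :=
    Set.eq_univ_of_forall isHermitian_dilation
  have hG := ((convexOn_trace_cfc (m := Fin n ⊕ Fin n) hf).comp_linearMap dilation).smul
    (by norm_num : (0 : ℝ) ≤ 1 / 2)
  rw [hD] at hG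
  refine hG.congr fun Z _ => ?_
  have key := trace_cfc_sq_add_dilation Z (μ ^ 2) (fun x => x ^ (p / 2))
  beta_reduce at key
  simp only [Function.comp_apply, smul_eq_mul, key,
    mpow_eq_cfc (isHermitian_transpose_mul_self_add_smul_one Z _)]
  ring

theorem convexOn_rpow_sum_sq_col_sub_add_sq {k m n : Type*} [Fintype m] [Fintype n]
    (X : Matrix m n ℝ) (Y : Matrix m k ℝ) (c : ℝ) {r : ℝ} (hr : 1 ≤ r) (i : k) :
    ConvexOn ℝ Set.univ
      (fun Z : Matrix n k ℝ => (∑ j, ((X * Z - Y) j i) ^ 2 + c ^ 2) ^ (r / 2)) := by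
  let L : Matrix n k ℝ →ₗ[ℝ] EuclideanSpace ℝ m :=
    { toFun Z := WithLp.toLp 2 fun j => (X * Z) j i
      map_add' Z W := by ext; simp [Matrix.mul_add]
      map_smul' a Z := by ext; simp }
  have hcol : ∀ Z, ∑ j, ((X * Z - Y) j i) ^ 2
      = ‖-WithLp.toLp 2 (fun j => Y j i) + L Z‖ ^ 2 := by
    intro Z
    simp [EuclideanSpace.norm_sq_eq, L, neg_add_eq_sub]
  exact (((convexOn_rpow_norm_sq_add_sq c hr).translate_right
    (-WithLp.toLp 2 (fun j => Y j i))).comp_linearMap L).congr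
      fun Z _ => by simp only [Function.comp_apply, hcol]

theorem stmt_10_general {d n : ℕ} (X : Matrix (Fin d) (Fin n) ℝ) (lam p q μ : ℝ)
    (hlam : 0 < lam) (hp1 : 1 ≤ p) (hq1 : 1 ≤ q) :
    ConvexOn ℝ Set.univ
      (fun Z : Matrix (Fin n) (Fin n) ℝ => smoothJ X lam p q Z μ) :=
  (convexOn_trace_mpow_transpose_mul_self_add_sq μ hp1).add
    ((convexOn_finset_sum convex_univ univ fun i _ =>
      convexOn_rpow_sum_sq_col_sub_add_sq X X μ hq1 i).smul hlam.le)

/-- **Theorem 1 (convexity in `Z` for fixed `μ`).** For `1 ≤ p, q ≤ 2`, `λ > 0` and fixed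
`μ ∈ ℝ`, the function `Z ↦ Tr((ZᵀZ + μ²I)^{p/2}) + λ·∑ᵢ (‖(XZ − X)ᵢ‖₂² + μ²)^{q/2}` is convex
on `ℝ^{n×n}`. -/
theorem stmt_10 {d n : ℕ} (X : Matrix (Fin d) (Fin n) ℝ) (lam p q μ : ℝ)
    (hlam : 0 < lam) (hp1 : 1 ≤ p) (hp2 : p ≤ 2) (hq1 : 1 ≤ q) (hq2 : q ≤ 2) :
    ConvexOn ℝ Set.univ
      (fun Z : Matrix (Fin n) (Fin n) ℝ => smoothJ X lam p q Z μ) :=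
  stmt_10_general X lam p q μ hlam hp1 hq1
end
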